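/- arXiv:2207.09511 — 5 statements merged into one kernel-verified Lean document; each statement's English description precedes it below -/
import Mathlib

section
/- Let f be continuous on [0,1] with sup norm M, and suppose |f(x) - f(y)| < ε whenever |x - y| < δ. Then for every x ∈ [0,1] and m ≥ 1, |p_m(x) - f(x)| ≤ ε + 2M/(δ² m), where p_m is the m-th Bernstein polynomial of f. -/
theorem bernstein_error_bound (f : ℝ → ℝ) (M ε δ : ℝ)
    (hf : ContinuousOn f (Set.Icc (0:ℝ) 1))
    (hε : 0 < ε) (hδ : 0 < δ)
    (hM : IsLUB ((fun x => |f x|) '' Set.Icc (0:ℝ) 1) M)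
    (hmod : ∀ x ∈ Set.Icc (0:ℝ) 1, ∀ y ∈ Set.Icc (0:ℝ) 1, |x - y| < δ → |f x - f y| < ε)
    (m : ℕ) (hm : 1 ≤ m) (x : ℝ) (hx : x ∈ Set.Icc (0:ℝ) 1) :
    |(∑ k ∈ Finset.range (m + 1),
        f ((k : ℝ) / m) * (m.choose k : ℝ) * x ^ k * (1 - x) ^ (m - k)) - f x|
      ≤ ε + 2 * M / (δ ^ 2 * m) := by
  obtain ⟨hx0, hx1⟩ := hx
  have hmpos : (0:ℝ) < m := by exact_mod_cast hm
  have hMnn : 0 ≤ M := le_trans (abs_nonneg (f 0)) (hM.1 ⟨0, by simp, rfl⟩)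
  have hfM : ∀ y ∈ Set.Icc (0:ℝ) 1, |f y| ≤ M := fun y hy => hM.1 ⟨y, hy, rfl⟩
  set b : ℕ → ℝ := fun k => (m.choose k : ℝ) * x ^ k * (1 - x) ^ (m - k) with hb
  have hbnn : ∀ k, 0 ≤ b k := fun k =>
    mul_nonneg (mul_nonneg (by positivity) (pow_nonneg hx0 _))
      (pow_nonneg (by linarith) _)
  have hsum1 : ∑ k ∈ Finset.range (m + 1), b k = 1 := by
    have := congrArg (Polynomial.eval x) (bernsteinPolynomial.sum ℝ m)
    simpa [Polynomial.eval_finset_sum, bernsteinPolynomial, b] using this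
  have hvar : ∑ k ∈ Finset.range (m + 1), ((k : ℝ) / m - x) ^ 2 * b k
      = x * (1 - x) / m := by
    have h := congrArg (Polynomial.eval x) (bernsteinPolynomial.variance ℝ m)
    simp only [Polynomial.eval_finset_sum, Polynomial.eval_mul, Polynomial.eval_pow,
      Polynomial.eval_sub, Polynomial.eval_smul, Polynomial.eval_natCast,
      Polynomial.eval_X, Polynomial.eval_one, smul_eq_mul] at h
    have key : ∑ k ∈ Finset.range (m + 1), ((m : ℝ) * x - k) ^ 2 * b k
        = (m : ℝ) * x * (1 - x) := by
      simp only [nsmul_eq_mul] at h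
      rw [← h]
      exact Finset.sum_congr rfl fun k _ => by simp [bernsteinPolynomial, b]
    have h2 : ∑ k ∈ Finset.range (m + 1), ((k : ℝ) / m - x) ^ 2 * b k
        = (∑ k ∈ Finset.range (m + 1), ((m : ℝ) * x - k) ^ 2 * b k) / (m : ℝ) ^ 2 := by
      rw [Finset.sum_div]
      refine Finset.sum_congr rfl fun k _ => ?_
      rw [eq_div_iff (pow_ne_zero 2 hmpos.ne')]
      have hm0 : (m:ℝ) ≠ 0 := hmpos.ne'
      field_simp
      ring
    rw [h2, key]
    field_simp
  have hrw : (∑ k ∈ Finset.range (m + 1),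
      f ((k : ℝ) / m) * (m.choose k : ℝ) * x ^ k * (1 - x) ^ (m - k)) - f x
      = ∑ k ∈ Finset.range (m + 1), (f ((k : ℝ) / m) - f x) * b k := by
    have h1 : ∑ k ∈ Finset.range (m + 1), (f ((k : ℝ) / m) - f x) * b k
        = (∑ k ∈ Finset.range (m + 1), f ((k : ℝ) / m) * b k)
          - f x * ∑ k ∈ Finset.range (m + 1), b k := by
      rw [Finset.mul_sum, ← Finset.sum_sub_distrib]
      exact Finset.sum_congr rfl fun k _ => by ring
    rw [h1, hsum1, mul_one]
    congr 1
    refine Finset.sum_congr rfl fun k _ => ?_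
    simp only [hb]; ring
  rw [hrw]
  have hpt : ∀ k ∈ Finset.range (m + 1),
      |f ((k : ℝ) / m) - f x| ≤ ε + 2 * M / δ ^ 2 * ((k : ℝ) / m - x) ^ 2 := by
    intro k hk
    have hk' : (k : ℝ) ≤ m := by
      exact_mod_cast Nat.lt_succ_iff.mp (Finset.mem_range.mp hk)
    have hkm : (k : ℝ) / m ∈ Set.Icc (0:ℝ) 1 :=
      ⟨div_nonneg (Nat.cast_nonneg k) hmpos.le, (div_le_one hmpos).mpr hk'⟩
    by_cases hcase : |(k : ℝ) / m - x| < δ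
    · have := hmod _ hkm _ ⟨hx0, hx1⟩ hcase
      nlinarith [sq_nonneg ((k:ℝ)/m - x), div_nonneg (mul_nonneg (by norm_num : (0:ℝ) ≤ 2) hMnn) (sq_nonneg δ),
        mul_nonneg (div_nonneg (mul_nonneg (by norm_num : (0:ℝ) ≤ 2) hMnn) (sq_nonneg δ)) (sq_nonneg ((k:ℝ)/m - x))]
    · push_neg at hcase
      have hd2 : δ ^ 2 ≤ ((k : ℝ) / m - x) ^ 2 := by
        have := abs_nonneg ((k:ℝ)/m - x)
        nlinarith [sq_abs ((k:ℝ)/m - x)]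
      have h2M : |f ((k : ℝ) / m) - f x| ≤ 2 * M := by
        calc |f ((k : ℝ) / m) - f x| ≤ |f ((k : ℝ) / m)| + |f x| := abs_sub _ _
          _ ≤ M + M := add_le_add (hfM _ hkm) (hfM _ ⟨hx0, hx1⟩)
          _ = 2 * M := by ring
      have : 2 * M ≤ 2 * M / δ ^ 2 * ((k : ℝ) / m - x) ^ 2 := by
        rw [div_mul_eq_mul_div, le_div_iff₀ (by positivity)]
        nlinarith
      linarith
  calc |∑ k ∈ Finset.range (m + 1), (f ((k : ℝ) / m) - f x) * b k|
      ≤ ∑ k ∈ Finset.range (m + 1), |f ((k : ℝ) / m) - f x| * b k := by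
        refine (Finset.abs_sum_le_sum_abs _ _).trans (le_of_eq ?_)
        exact Finset.sum_congr rfl fun k _ => by rw [abs_mul, abs_of_nonneg (hbnn k)]
    _ ≤ ∑ k ∈ Finset.range (m + 1),
          (ε + 2 * M / δ ^ 2 * ((k : ℝ) / m - x) ^ 2) * b k :=
        Finset.sum_le_sum fun k hk => mul_le_mul_of_nonneg_right (hpt k hk) (hbnn k)
    _ = ε + 2 * M / δ ^ 2 * (x * (1 - x) / m) := by
        simp only [add_mul, Finset.sum_add_distrib, ← Finset.mul_sum, hsum1, mul_one, mul_assoc]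
        rw [hvar]
    _ ≤ ε + 2 * M / (δ ^ 2 * m) := by
        have hx2 : x * (1 - x) ≤ 1 := by nlinarith
        have : 2 * M / δ ^ 2 * (x * (1 - x) / m) ≤ 2 * M / (δ ^ 2 * m) := by
          rw [div_mul_div_comm, div_le_div_iff₀ (by positivity) (by positivity)]
          nlinarith [mul_nonneg (mul_nonneg hMnn (mul_pos (pow_pos hδ 2) hmpos).le)
            (sub_nonneg.mpr hx2)]
        linarith
end

section
/- Let σ ∈ C^∞((α,β)) on an open interval. If for every x ∈ (α,β) there exists a natural number k (depending on x) such that the k-th derivative of σ vanishes at x, then σ is a polynomial on (α,β). -/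
open Set Polynomial Metric

/-- On an open set, `iteratedDerivWithin` agrees with `iteratedDeriv`. -/
lemma iterWithin_eq {f : ℝ → ℝ} {s : Set ℝ} (hs : IsOpen s) {x : ℝ} (hx : x ∈ s) (k : ℕ) :
    iteratedDerivWithin k f s x = iteratedDeriv k f x := by
  rw [iteratedDerivWithin_eq_iteratedFDerivWithin, iteratedDeriv_eq_iteratedFDeriv,
    iteratedFDerivWithin_of_isOpen k hs hx]

/-- Continuity of iterated derivatives of a smooth function on an open set. -/
lemma contOn_iter {σ : ℝ → ℝ} {s : Set ℝ} (hs : IsOpen s) (hσ : ContDiffOn ℝ (⊤ : ℕ∞) σ s) (k : ℕ) :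
    ContinuousOn (iteratedDeriv k σ) s := by
  have h1 : ContinuousOn (iteratedDerivWithin k σ s) s :=
    hσ.continuousOn_iteratedDerivWithin (by exact_mod_cast le_top) hs.uniqueDiffOn
  exact h1.congr fun x hx => (iterWithin_eq hs hx k).symm

/-- Derivative of an iterated derivative at a point of an open set. -/
lemma hasDeriv_iter {σ : ℝ → ℝ} {s : Set ℝ} (hs : IsOpen s) (hσ : ContDiffOn ℝ (⊤ : ℕ∞) σ s)
    {x : ℝ} (hx : x ∈ s) (k : ℕ) :
    HasDerivAt (iteratedDeriv k σ) (iteratedDeriv (k + 1) σ x) x := by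
  have h1 : DifferentiableWithinAt ℝ (iteratedDerivWithin k σ s) s x :=
    hσ.differentiableOn_iteratedDerivWithin (by exact_mod_cast ENat.coe_lt_top k) hs.uniqueDiffOn x hx
  have h2 : DifferentiableAt ℝ (iteratedDerivWithin k σ s) x :=
    h1.differentiableAt (hs.mem_nhds hx)
  have heq : iteratedDerivWithin k σ s =ᶠ[nhds x] iteratedDeriv k σ :=
    Filter.eventuallyEq_of_mem (hs.mem_nhds hx) fun y hy => iterWithin_eq hs hy k
  have h3 : DifferentiableAt ℝ (iteratedDeriv k σ) x := h2.congr_of_eventuallyEq heq.symm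
  have := h3.hasDerivAt
  rwa [show deriv (iteratedDeriv k σ) x = iteratedDeriv (k + 1) σ x by
    rw [iteratedDeriv_succ]] at this

/-- A polynomial all of whose iterated derivatives vanish at a point is zero. -/
lemma poly_eq_zero_of_derivs (x : ℝ) :
    ∀ (n : ℕ) (p : Polynomial ℝ), p.natDegree ≤ n →
      (∀ j : ℕ, (derivative^[j] p).eval x = 0) → p = 0 := by
  intro n
  induction n with
  | zero =>
    intro p hdeg hj
    have := Polynomial.eq_C_of_natDegree_le_zero hdeg
    have h0 := hj 0
    simp only [Function.iterate_zero, id_eq] at h0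
    rw [this] at h0 ⊢
    simp at h0
    simp [h0]
  | succ n IH =>
    intro p hdeg hj
    have hd : derivative p = 0 := by
      apply IH
      · exact le_trans (Polynomial.natDegree_derivative_le p) (by omega)
      · intro j
        rw [← Function.iterate_succ_apply]
        exact hj (j + 1)
    have : p.natDegree = 0 := Polynomial.natDegree_eq_zero_of_derivative_eq_zero hd
    have := Polynomial.eq_C_of_natDegree_le_zero this.le
    have h0 := hj 0
    simp only [Function.iterate_zero, id_eq] at h0
    rw [this] at h0 ⊢
    simp at h0
    simp [h0]

/-- Iterated derivative of a polynomial function. -/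
lemma iter_poly (p : Polynomial ℝ) (k : ℕ) :
    iteratedDeriv k (fun y => p.eval y) = fun y => (derivative^[k] p).eval y := by
  induction k generalizing p with
  | zero => simp
  | succ k IH =>
    rw [iteratedDeriv_succ']
    have : deriv (fun y => p.eval y) = fun y => (derivative p).eval y := by
      funext y; exact Polynomial.deriv (p := p)
    rw [this, IH]
    funext y
    rw [Function.iterate_succ_apply]

/-- Every real polynomial has a polynomial antiderivative. -/
lemma exists_antideriv (p : Polynomial ℝ) : ∃ q : Polynomial ℝ, derivative q = p := by
  induction p using Polynomial.induction_on' with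
  | add f g hf hg =>
    obtain ⟨F, hF⟩ := hf; obtain ⟨G, hG⟩ := hg
    exact ⟨F + G, by simp [hF, hG]⟩
  | monomial n a =>
    refine ⟨Polynomial.monomial (n + 1) (a / (n + 1)), ?_⟩
    rw [Polynomial.derivative_monomial]
    simp only [Nat.add_sub_cancel, Nat.cast_add, Nat.cast_one]
    congr 1
    field_simp

/-- A function whose derivative on an open interval is a polynomial is itself a polynomial. -/
lemma poly_of_hasDerivAt_poly (a b : ℝ) (f : ℝ → ℝ) (p : Polynomial ℝ)
    (hf : ∀ x ∈ Set.Ioo a b, HasDerivAt f (p.eval x) x) :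
    ∃ q : Polynomial ℝ, ∀ x ∈ Set.Ioo a b, f x = q.eval x := by
  rcases (Set.Ioo a b).eq_empty_or_nonempty with he | ⟨x₀, hx₀⟩
  · exact ⟨0, by simp [he]⟩
  obtain ⟨P, hP⟩ := exists_antideriv p
  set g : ℝ → ℝ := fun x => f x - P.eval x with hg
  have hg' : ∀ x ∈ Set.Ioo a b, HasDerivAt g 0 x := by
    intro x hx
    have h1 : HasDerivAt (fun y => P.eval y) (p.eval x) x := by
      have := Polynomial.hasDerivAt P x
      rwa [hP] at this
    have h2 := (hf x hx).sub h1
    rw [sub_self] at h2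
    exact h2
  have hconst : ∀ x ∈ Set.Ioo a b, g x = g x₀ := by
    intro x hx
    apply (convex_Ioo a b).is_const_of_fderivWithin_eq_zero
      (fun y hy => ((hg' y hy).differentiableAt).differentiableWithinAt) ?_ hx hx₀
    intro y hy
    have h0 : HasFDerivAt g (0 : ℝ →L[ℝ] ℝ) y := by
      have := (hg' y hy).hasFDerivAt
      rwa [ContinuousLinearMap.toSpanSingleton_zero] at this
    rw [fderivWithin_of_isOpen isOpen_Ioo hy, h0.fderiv]
  refine ⟨P + Polynomial.C (g x₀), fun x hx => ?_⟩
  have := hconst x hx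
  simp only [hg] at this ⊢
  simp [Polynomial.eval_add]
  linarith

/-- A smooth function on an open set whose `k`-th iterated derivative is polynomial on a
subinterval is itself polynomial there. -/
lemma poly_of_iter_poly {σ : ℝ → ℝ} {s : Set ℝ} (hs : IsOpen s) (hσ : ContDiffOn ℝ (⊤ : ℕ∞) σ s)
    (a b : ℝ) (hab : Set.Ioo a b ⊆ s) :
    ∀ (k : ℕ) (p : Polynomial ℝ), (∀ x ∈ Set.Ioo a b, iteratedDeriv k σ x = p.eval x) →
      ∃ q : Polynomial ℝ, ∀ x ∈ Set.Ioo a b, σ x = q.eval x := by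
  intro k
  induction k with
  | zero =>
    intro p hp
    exact ⟨p, fun x hx => by simpa [iteratedDeriv_zero] using hp x hx⟩
  | succ k IH =>
    intro p hp
    have hd : ∀ x ∈ Set.Ioo a b, HasDerivAt (iteratedDeriv k σ) (p.eval x) x := by
      intro x hx
      have := hasDeriv_iter hs hσ (hab hx) k
      rwa [hp x hx] at this
    obtain ⟨q, hq⟩ := poly_of_hasDerivAt_poly a b _ p hd
    exact IH q hq

/-- Two continuous functions agreeing on a set agree at points of its closure. -/
lemma eq_at_closure {g h : ℝ → ℝ} {s : Set ℝ} {x : ℝ} (hx : x ∈ closure s)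
    (hg : ContinuousAt g x) (hh : ContinuousAt h x) (he : Set.EqOn g h s) : g x = h x := by
  have hne : (nhdsWithin x s).NeBot := mem_closure_iff_nhdsWithin_neBot.mp hx
  have t1 : Filter.Tendsto g (nhdsWithin x s) (nhds (g x)) := hg.continuousWithinAt
  have t2 : Filter.Tendsto h (nhdsWithin x s) (nhds (h x)) := hh.continuousWithinAt
  have t1' : Filter.Tendsto h (nhdsWithin x s) (nhds (g x)) :=
    t1.congr' (Filter.eventuallyEq_of_mem self_mem_nhdsWithin he)
  exact tendsto_nhds_unique t1' t2

/-- If `f` vanishes at `x` and at points accumulating at `x`, any derivative of `f` at `x`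
vanishes. -/
lemma deriv_zero_of_acc {f : ℝ → ℝ} {d x : ℝ} (hf : HasDerivAt f d x) (hx : f x = 0)
    (hacc : ∀ δ > 0, ∃ z, z ≠ x ∧ |z - x| < δ ∧ f z = 0) : d = 0 := by
  set S : Set ℝ := {z | z ≠ x ∧ f z = 0} with hS
  have hcl : x ∈ closure S := by
    rw [Metric.mem_closure_iff]
    intro ε hε
    obtain ⟨z, hz1, hz2, hz3⟩ := hacc ε hε
    exact ⟨z, ⟨hz1, hz3⟩, by rwa [Real.dist_eq, abs_sub_comm]⟩
  have hne : (nhdsWithin x S).NeBot := mem_closure_iff_nhdsWithin_neBot.mp hcl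
  have hts : Filter.Tendsto (slope f x) (nhdsWithin x {x}ᶜ) (nhds d) :=
    hasDerivAt_iff_tendsto_slope.mp hf
  have hts' : Filter.Tendsto (slope f x) (nhdsWithin x S) (nhds d) :=
    hts.mono_left (nhdsWithin_mono x fun z hz => hz.1)
  have h0 : Filter.Tendsto (slope f x) (nhdsWithin x S) (nhds 0) := by
    apply Filter.Tendsto.congr' (Filter.eventuallyEq_of_mem self_mem_nhdsWithin ?_) tendsto_const_nhds
    intro z hz
    simp [slope_def_field, hz.2, hx]
  exact tendsto_nhds_unique hts' h0

/-- A function which is locally polynomial on an open interval is polynomial. -/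
lemma poly_of_locally_poly (f : ℝ → ℝ) (a b : ℝ)
    (h : ∀ x ∈ Set.Ioo a b, ∃ ε > 0, ∃ p : Polynomial ℝ,
      Set.EqOn f (fun y => p.eval y) (Set.Ioo a b ∩ Metric.ball x ε)) :
    ∃ p : Polynomial ℝ, ∀ x ∈ Set.Ioo a b, f x = p.eval x := by
  rcases (Set.Ioo a b).eq_empty_or_nonempty with he | ⟨x₀, hx₀⟩
  · exact ⟨0, by simp [he]⟩
  obtain ⟨ε₀, hε₀, p₀, hp₀⟩ := h x₀ hx₀
  -- key: two polynomials agreeing with f near a common point of the interval are equal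
  have key : ∀ x ∈ Set.Ioo a b, ∀ ε₁ > 0, ∀ ε₂ > 0, ∀ p q : Polynomial ℝ,
      Set.EqOn f (fun y => p.eval y) (Set.Ioo a b ∩ Metric.ball x ε₁) →
      Set.EqOn f (fun y => q.eval y) (Set.Ioo a b ∩ Metric.ball x ε₂) → p = q := by
    intro x hx ε₁ hε₁ ε₂ hε₂ p q hp hq
    apply Polynomial.eq_of_infinite_eval_eq
    have hsub : Set.Ioo (max a (x - min ε₁ ε₂)) (min b (x + min ε₁ ε₂)) ⊆
        {y | p.eval y = q.eval y} := by
      intro y hy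
      have hy1 : y ∈ Set.Ioo a b := ⟨lt_of_le_of_lt (le_max_left _ _) hy.1,
        lt_of_lt_of_le hy.2 (min_le_left _ _)⟩
      have hy2 : |y - x| < min ε₁ ε₂ := by
        rw [abs_lt]
        constructor
        · have := lt_of_le_of_lt (le_max_right a (x - min ε₁ ε₂)) hy.1; linarith
        · have := lt_of_lt_of_le hy.2 (min_le_right b (x + min ε₁ ε₂)); linarith
      have hm1 : y ∈ Metric.ball x ε₁ := by
        rw [Metric.mem_ball, Real.dist_eq]; exact lt_of_lt_of_le hy2 (min_le_left _ _)
      have hm2 : y ∈ Metric.ball x ε₂ := by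
        rw [Metric.mem_ball, Real.dist_eq]; exact lt_of_lt_of_le hy2 (min_le_right _ _)
      have e1 := hp ⟨hy1, hm1⟩
      have e2 := hq ⟨hy1, hm2⟩
      have := e1.symm.trans e2
      simpa using this
    apply Set.Infinite.mono hsub
    apply Set.Ioo_infinite
    have hm : (0:ℝ) < min ε₁ ε₂ := lt_min hε₁ hε₂
    have h1 : max a (x - min ε₁ ε₂) < x := max_lt hx.1 (by linarith)
    have h2 : x < min b (x + min ε₁ ε₂) := lt_min hx.2 (by linarith)
    linarith
  -- the clopen-type argument via preconnectedness
  set A : Set ℝ := {x | ∃ ε > 0, Set.EqOn f (fun y => p₀.eval y) (Set.Ioo a b ∩ Metric.ball x ε)}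
    with hA
  set B : Set ℝ := {x | ∃ ε > 0, ∃ p : Polynomial ℝ, p ≠ p₀ ∧
      Set.EqOn f (fun y => p.eval y) (Set.Ioo a b ∩ Metric.ball x ε)} with hB
  have hAopen : IsOpen A := by
    rw [Metric.isOpen_iff]
    rintro x ⟨ε, hε, hx⟩
    refine ⟨ε / 2, by linarith, fun y hy => ?_⟩
    refine ⟨ε / 2, by linarith, fun z hz => hx ⟨hz.1, ?_⟩⟩
    have h1 : dist z y < ε / 2 := hz.2
    have h2 : dist y x < ε / 2 := hy
    rw [Metric.mem_ball]
    calc dist z x ≤ dist z y + dist y x := dist_triangle _ _ _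
      _ < ε := by linarith
  have hBopen : IsOpen B := by
    rw [Metric.isOpen_iff]
    rintro x ⟨ε, hε, p, hpne, hx⟩
    refine ⟨ε / 2, by linarith, fun y hy => ?_⟩
    refine ⟨ε / 2, by linarith, p, hpne, fun z hz => hx ⟨hz.1, ?_⟩⟩
    have h1 : dist z y < ε / 2 := hz.2
    have h2 : dist y x < ε / 2 := hy
    rw [Metric.mem_ball]
    calc dist z x ≤ dist z y + dist y x := dist_triangle _ _ _
      _ < ε := by linarith
  have hcover : Set.Ioo a b ⊆ A ∪ B := by
    intro x hx
    obtain ⟨ε, hε, p, hp⟩ := h x hx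
    by_cases hpp : p = p₀
    · exact Or.inl ⟨ε, hε, hpp ▸ hp⟩
    · exact Or.inr ⟨ε, hε, p, hpp, hp⟩
  have hBempty : Set.Ioo a b ∩ B = ∅ := by
    by_contra hne
    obtain ⟨x, hxI, hxB⟩ := Set.nonempty_iff_ne_empty.mpr hne
    have hAne : (Set.Ioo a b ∩ A).Nonempty := ⟨x₀, hx₀, ε₀, hε₀, hp₀⟩
    have hBne : (Set.Ioo a b ∩ B).Nonempty := ⟨x, hxI, hxB⟩
    have hpc : IsPreconnected (Set.Ioo a b) := isPreconnected_Ioo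
    obtain ⟨z, hzI, hzA, hzB⟩ := hpc A B hAopen hBopen hcover hAne hBne
    obtain ⟨ε₁, hε₁, hz1⟩ := hzA
    obtain ⟨ε₂, hε₂, p, hpne, hz2⟩ := hzB
    exact hpne (key z hzI ε₂ hε₂ ε₁ hε₁ p p₀ hz2 hz1)
  refine ⟨p₀, fun x hx => ?_⟩
  have hxA : x ∈ A := by
    rcases hcover hx with hA' | hB'
    · exact hA'
    · exact absurd (Set.mem_inter hx hB') (by rw [hBempty]; exact Set.notMem_empty x)
  obtain ⟨ε, hε, hx'⟩ := hxA
  exact hx' ⟨hx, Metric.mem_ball_self hε⟩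

/-- Boundary values of iterated derivatives when `σ` is polynomial on an adjacent interval. -/
lemma boundary_derivs {σ : ℝ → ℝ} {s : Set ℝ} (hs : IsOpen s) (hσ : ContDiffOn ℝ (⊤ : ℕ∞) σ s)
    {u v x : ℝ} (hsub : Set.Ioo u v ⊆ s) (hx : x ∈ s) (hxcl : x ∈ closure (Set.Ioo u v))
    (p : Polynomial ℝ) (hp : Set.EqOn σ (fun y => p.eval y) (Set.Ioo u v)) (j : ℕ) :
    iteratedDeriv j σ x = (derivative^[j] p).eval x := by
  have he : Set.EqOn (iteratedDeriv j σ) (iteratedDeriv j fun y => p.eval y) (Set.Ioo u v) :=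
    hp.iteratedDeriv_of_isOpen isOpen_Ioo j
  rw [iter_poly] at he
  exact eq_at_closure hxcl ((contOn_iter hs hσ j).continuousAt (hs.mem_nhds hx))
    (Polynomial.continuous _).continuousAt he

theorem smooth_with_vanishing_derivative_is_polynomial
    (α β : ℝ) (hαβ : α < β) (σ : ℝ → ℝ)
    (hσ : ContDiffOn ℝ (⊤ : ℕ∞) σ (Set.Ioo α β))
    (h : ∀ x ∈ Set.Ioo α β, ∃ k : ℕ, iteratedDerivWithin k σ (Set.Ioo α β) x = 0) :
    ∃ p : Polynomial ℝ, ∀ x ∈ Set.Ioo α β, σ x = p.eval x := by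
  set I : Set ℝ := Set.Ioo α β with hIdef
  have hIopen : IsOpen I := isOpen_Ioo
  have hder : ∀ x ∈ I, ∃ k, iteratedDeriv k σ x = 0 := by
    intro x hx
    obtain ⟨k, hk⟩ := h x hx
    exact ⟨k, by rwa [iterWithin_eq hIopen hx] at hk⟩
  set U : Set ℝ := {x | ∃ ε > 0, ∃ p : Polynomial ℝ,
    Set.EqOn σ (fun y => p.eval y) (I ∩ Metric.ball x ε)} with hUdef
  have hUopen : IsOpen U := by
    rw [Metric.isOpen_iff]
    rintro x ⟨ε, hε, p, hx⟩
    refine ⟨ε / 2, by linarith, fun y hy => ?_⟩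
    refine ⟨ε / 2, by linarith, p, fun z hz => hx ⟨hz.1, ?_⟩⟩
    have h1 : dist z y < ε / 2 := hz.2
    have h2 : dist y x < ε / 2 := hy
    rw [Metric.mem_ball]
    calc dist z x ≤ dist z y + dist y x := dist_triangle _ _ _
      _ < ε := by linarith
  have hcomp : ∀ u v : ℝ, Set.Ioo u v ⊆ I → Set.Ioo u v ⊆ U →
      ∃ p : Polynomial ℝ, Set.EqOn σ (fun y => p.eval y) (Set.Ioo u v) := by
    intro u v hI' hU'
    have hloc : ∀ x ∈ Set.Ioo u v, ∃ ε > 0, ∃ p : Polynomial ℝ,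
        Set.EqOn σ (fun y => p.eval y) (Set.Ioo u v ∩ Metric.ball x ε) := by
      intro x hx
      obtain ⟨ε, hε, p, hp⟩ := hU' hx
      exact ⟨ε, hε, p, fun z hz => hp ⟨hI' hz.1, hz.2⟩⟩
    obtain ⟨p, hp⟩ := poly_of_locally_poly σ u v hloc
    exact ⟨p, fun x hx => hp x hx⟩
  set X : Set ℝ := I \ U with hXdef
  have hcont : ∀ j : ℕ, ∀ x ∈ I, ContinuousAt (iteratedDeriv j σ) x := fun j x hx =>
    (contOn_iter hIopen hσ j).continuousAt (hIopen.mem_nhds hx)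
  -- X has no isolated points
  have hperf : ∀ x ∈ X, ∀ δ > 0, ∃ z, z ∈ X ∧ z ≠ x ∧ |z - x| < δ := by
    rintro x ⟨hxI, hxU⟩ δ hδ
    by_contra hcon
    push_neg at hcon
    have hxI' : α < x ∧ x < β := ⟨hxI.1, hxI.2⟩
    set δ' := min δ (min (x - α) (β - x)) with hδ'def
    have hδ' : 0 < δ' := lt_min hδ (lt_min (by linarith [hxI'.1]) (by linarith [hxI'.2]))
    have hδ'δ : δ' ≤ δ := min_le_left _ _
    have hδ'α : δ' ≤ x - α := le_trans (min_le_right _ _) (min_le_left _ _)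
    have hδ'β : δ' ≤ β - x := le_trans (min_le_right _ _) (min_le_right _ _)
    have hball : Set.Ioo (x - δ') (x + δ') ⊆ I := by
      intro z hz
      exact ⟨by linarith [hz.1], by linarith [hz.2]⟩
    have hnoX : ∀ z ∈ Set.Ioo (x - δ') (x + δ'), z ≠ x → z ∉ X := by
      intro z hz hzx hzX
      have h1 := hcon z hzX hzx
      have h2 : |z - x| < δ' := by
        rw [abs_lt]; exact ⟨by linarith [hz.1], by linarith [hz.2]⟩
      linarith
    have hleft : Set.Ioo (x - δ') x ⊆ U := by
      intro z hz
      have hz' : z ∈ Set.Ioo (x - δ') (x + δ') := ⟨hz.1, by linarith [hz.2]⟩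
      by_contra hzU
      exact hnoX z hz' (ne_of_lt hz.2) ⟨hball hz', hzU⟩
    have hright : Set.Ioo x (x + δ') ⊆ U := by
      intro z hz
      have hz' : z ∈ Set.Ioo (x - δ') (x + δ') := ⟨by linarith [hz.1], hz.2⟩
      by_contra hzU
      exact hnoX z hz' (ne_of_gt hz.1) ⟨hball hz', hzU⟩
    have hsub1 : Set.Ioo (x - δ') x ⊆ I := fun z hz => hball ⟨hz.1, by linarith [hz.2]⟩
    have hsub2 : Set.Ioo x (x + δ') ⊆ I := fun z hz => hball ⟨by linarith [hz.1], hz.2⟩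
    obtain ⟨p, hp⟩ := hcomp _ _ hsub1 hleft
    obtain ⟨q, hq⟩ := hcomp _ _ hsub2 hright
    have hxcl1 : x ∈ closure (Set.Ioo (x - δ') x) := by
      rw [closure_Ioo (by linarith : x - δ' ≠ x)]
      exact ⟨by linarith, le_refl x⟩
    have hxcl2 : x ∈ closure (Set.Ioo x (x + δ')) := by
      rw [closure_Ioo (by linarith : x ≠ x + δ')]
      exact ⟨le_refl x, by linarith⟩
    have hdp : ∀ j, iteratedDeriv j σ x = (derivative^[j] p).eval x := fun j =>
      boundary_derivs hIopen hσ hsub1 hxI hxcl1 p hp j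
    have hdq : ∀ j, iteratedDeriv j σ x = (derivative^[j] q).eval x := fun j =>
      boundary_derivs hIopen hσ hsub2 hxI hxcl2 q hq j
    have hpq : p = q := by
      have hsub0 : p - q = 0 := by
        apply poly_eq_zero_of_derivs x (p - q).natDegree (p - q) le_rfl
        intro j
        have hiter : derivative^[j] (p - q) = derivative^[j] p - derivative^[j] q := by
          induction j with
          | zero => simp
          | succ j IH =>
            rw [Function.iterate_succ_apply', Function.iterate_succ_apply',
              Function.iterate_succ_apply', IH, Polynomial.derivative_sub]
        rw [hiter, Polynomial.eval_sub, ← hdp j, ← hdq j, sub_self]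
      have := sub_eq_zero.mp hsub0
      exact this
    have hσx : σ x = p.eval x :=
      eq_at_closure hxcl1 (hσ.continuousOn.continuousAt (hIopen.mem_nhds hxI))
        (Polynomial.continuous _).continuousAt hp
    apply hxU
    refine ⟨δ', hδ', p, fun z hz => ?_⟩
    have hzb : |z - x| < δ' := by rw [← Real.dist_eq]; exact hz.2
    rw [abs_lt] at hzb
    rcases lt_trichotomy z x with hlt | heq | hgt
    · exact hp ⟨by linarith [hzb.1], hlt⟩
    · rw [heq]; exact hσx
    · have := hq ⟨hgt, by linarith [hzb.2]⟩
      rw [this, hpq]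
  -- main claim : every point of I is in U, via Baire category on X
  have hXempty : ∀ x ∈ I, x ∈ U := by
    by_contra hcon
    push_neg at hcon
    obtain ⟨x₀, hx₀I, hx₀U⟩ := hcon
    have hx₀X : x₀ ∈ X := ⟨hx₀I, hx₀U⟩
    have hlc : IsLocallyClosed X := ⟨I, Uᶜ, hIopen, hUopen.isClosed_compl, by
      rw [hXdef, Set.diff_eq]⟩
    haveI := hlc.locallyCompactSpace
    haveI : Nonempty X := ⟨⟨x₀, hx₀X⟩⟩
    have hclosed : ∀ k : ℕ, IsClosed {z : X | iteratedDeriv k σ ↑z = 0} := by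
      intro k
      have hc : Continuous fun z : X => iteratedDeriv k σ ↑z :=
        (contOn_iter hIopen hσ k).comp_continuous continuous_subtype_val fun z => z.2.1
      exact isClosed_eq hc continuous_const
    have hunion : ⋃ k, {z : X | iteratedDeriv k σ ↑z = 0} = Set.univ := by
      ext z
      simp only [Set.mem_iUnion, Set.mem_univ, iff_true, Set.mem_setOf_eq]
      exact hder z z.2.1
    obtain ⟨k, y, hy⟩ := nonempty_interior_of_iUnion_of_closed hclosed hunion
    obtain ⟨r, hr, hballint⟩ := Metric.isOpen_iff.mp isOpen_interior y hy
    have hEk : ∀ z, z ∈ X → |z - ↑y| < r → iteratedDeriv k σ z = 0 := by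
      intro z hz hzr
      have hm : (⟨z, hz⟩ : X) ∈ Metric.ball y r := by
        rw [Metric.mem_ball, Subtype.dist_eq, Real.dist_eq]; exact hzr
      have := interior_subset (hballint hm)
      exact this
    set y₀ : ℝ := ↑y with hy₀def
    have hy₀X : y₀ ∈ X := y.2
    have hy₀I : y₀ ∈ I := y.2.1
    set c : ℝ := max (y₀ - r) α with hcdef
    set d : ℝ := min (y₀ + r) β with hddef
    have hcd : ∀ z ∈ Set.Ioo c d, z ∈ I ∧ |z - y₀| < r := by
      intro z hz
      have h1 : y₀ - r < z := lt_of_le_of_lt (le_max_left _ _) hz.1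
      have h2 : α < z := lt_of_le_of_lt (le_max_right _ _) hz.1
      have h3 : z < y₀ + r := lt_of_lt_of_le hz.2 (min_le_left _ _)
      have h4 : z < β := lt_of_lt_of_le hz.2 (min_le_right _ _)
      exact ⟨⟨h2, h4⟩, by rw [abs_lt]; exact ⟨by linarith, by linarith⟩⟩
    have hy₀cd : y₀ ∈ Set.Ioo c d :=
      ⟨max_lt (by linarith) hy₀I.1, lt_min (by linarith) hy₀I.2⟩
    have hX0 : ∀ z ∈ X ∩ Set.Ioo c d, iteratedDeriv k σ z = 0 := by
      rintro z ⟨hz1, hz2⟩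
      exact hEk z hz1 (hcd z hz2).2
    -- all higher derivatives vanish on X ∩ (c,d)
    have hXj : ∀ m : ℕ, ∀ z ∈ X ∩ Set.Ioo c d, iteratedDeriv (k + m) σ z = 0 := by
      intro m
      induction m with
      | zero => simpa using hX0
      | succ m IH =>
        rintro z ⟨hzX, hzcd⟩
        have hA := hasDeriv_iter hIopen hσ hzX.1 (k + m)
        have hzero : iteratedDeriv (k + m + 1) σ z = 0 := by
          apply deriv_zero_of_acc hA (IH z ⟨hzX, hzcd⟩)
          intro δ hδ
          set δ' := min δ (min (z - c) (d - z)) with hδ'def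
          have hδ'pos : 0 < δ' :=
            lt_min hδ (lt_min (by linarith [hzcd.1]) (by linarith [hzcd.2]))
          obtain ⟨w, hwX, hwz, hwδ⟩ := hperf z hzX δ' hδ'pos
          refine ⟨w, hwz, lt_of_lt_of_le hwδ (min_le_left _ _), ?_⟩
          have h1 : |w - z| < min (z - c) (d - z) := lt_of_lt_of_le hwδ (min_le_right _ _)
          rw [abs_lt] at h1
          have hm1 : min (z - c) (d - z) ≤ z - c := min_le_left _ _
          have hm2 : min (z - c) (d - z) ≤ d - z := min_le_right _ _
          have hwcd : w ∈ Set.Ioo c d := ⟨by linarith [h1.1], by linarith [h1.2]⟩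
          exact IH w ⟨hwX, hwcd⟩
        rw [show k + (m + 1) = k + m + 1 by ring]
        exact hzero
    -- the k-th derivative vanishes on all of (c,d)
    have hall : ∀ w ∈ Set.Ioo c d, iteratedDeriv k σ w = 0 := by
      intro w hw
      by_cases hwX : w ∈ X
      · exact hX0 w ⟨hwX, hw⟩
      have hwI : w ∈ I := (hcd w hw).1
      have hy₀w : y₀ ≠ w := fun he => hwX (he ▸ hy₀X)
      rcases lt_or_gt_of_ne hy₀w with hlt | hgt
      · -- y₀ < w : take the supremum of X-points below w
        set L : Set ℝ := X ∩ Set.Ioo c w with hLdef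
        have hLne : L.Nonempty := ⟨y₀, hy₀X, hy₀cd.1, hlt⟩
        have hLbdd : BddAbove L := ⟨w, fun t ht => ht.2.2.le⟩
        set a' : ℝ := sSup L with ha'def
        have hlub : IsLUB L a' := isLUB_csSup hLne hLbdd
        have ha'le : a' ≤ w := hlub.2 fun t ht => ht.2.2.le
        have ha'ge : y₀ ≤ a' := hlub.1 ⟨hy₀X, hy₀cd.1, hlt⟩
        have ha'cl : a' ∈ closure L := hlub.mem_closure hLne
        have ha'cd : a' ∈ Set.Ioo c d :=
          ⟨lt_of_lt_of_le hy₀cd.1 ha'ge, lt_of_le_of_lt ha'le hw.2⟩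
        have ha'X : a' ∈ X := by
          have hUc : a' ∈ Uᶜ :=
            closure_minimal (fun t ht => ht.1.2) hUopen.isClosed_compl ha'cl
          exact ⟨(hcd a' ha'cd).1, hUc⟩
        have ha'w : a' < w := lt_of_le_of_ne ha'le fun he => hwX (he ▸ ha'X)
        have hsubI : Set.Ioo a' w ⊆ I := fun t ht =>
          (hcd t ⟨lt_trans ha'cd.1 ht.1, lt_trans ht.2 hw.2⟩).1
        have hsubU : Set.Ioo a' w ⊆ U := by
          intro t ht
          by_contra htU
          have htX : t ∈ X := ⟨hsubI ht, htU⟩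
          have htL : t ∈ L := ⟨htX, lt_trans ha'cd.1 ht.1, ht.2⟩
          exact absurd (hlub.1 htL) (not_le.mpr ht.1)
        obtain ⟨p, hp⟩ := hcomp a' w hsubI hsubU
        have ha'cl2 : a' ∈ closure (Set.Ioo a' w) := by
          rw [closure_Ioo (ne_of_lt ha'w)]
          exact ⟨le_refl _, ha'le.trans (le_refl w)⟩
        have hbd : ∀ j, iteratedDeriv j σ a' = (derivative^[j] p).eval a' := fun j =>
          boundary_derivs hIopen hσ hsubI ha'X.1 ha'cl2 p hp j
        have hvanish : ∀ j, (derivative^[j] (derivative^[k] p)).eval a' = 0 := by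
          intro j
          have h1 : derivative^[j] (derivative^[k] p) = derivative^[k + j] p := by
            rw [← Function.iterate_add_apply, Nat.add_comm j k]
          rw [h1, ← hbd (k + j)]
          exact hXj j a' ⟨ha'X, ha'cd⟩
        have hpk : derivative^[k] p = 0 :=
          poly_eq_zero_of_derivs a' _ _ le_rfl hvanish
        have hEq : Set.EqOn (iteratedDeriv k σ) (fun _ => (0 : ℝ)) (Set.Ioo a' w) := by
          intro t ht
          have he : Set.EqOn (iteratedDeriv k σ) (iteratedDeriv k fun y => p.eval y)
              (Set.Ioo a' w) := hp.iteratedDeriv_of_isOpen isOpen_Ioo k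
          have h2 := he ht
          rw [iter_poly, hpk] at h2
          simpa using h2
        have hwcl : w ∈ closure (Set.Ioo a' w) := by
          rw [closure_Ioo (ne_of_lt ha'w)]
          exact ⟨ha'w.le, le_refl w⟩
        exact eq_at_closure hwcl (hcont k w hwI) continuousAt_const hEq
      · -- w < y₀ : take the infimum of X-points above w
        set R : Set ℝ := X ∩ Set.Ioo w d with hRdef
        have hRne : R.Nonempty := ⟨y₀, hy₀X, hgt, hy₀cd.2⟩
        have hRbdd : BddBelow R := ⟨w, fun t ht => ht.2.1.le⟩
        set b' : ℝ := sInf R with hb'def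
        have hglb : IsGLB R b' := isGLB_csInf hRne hRbdd
        have hb'ge : w ≤ b' := hglb.2 fun t ht => ht.2.1.le
        have hb'le : b' ≤ y₀ := hglb.1 ⟨hy₀X, hgt, hy₀cd.2⟩
        have hb'cl : b' ∈ closure R := hglb.mem_closure hRne
        have hb'cd : b' ∈ Set.Ioo c d :=
          ⟨lt_of_lt_of_le hw.1 hb'ge, lt_of_le_of_lt hb'le hy₀cd.2⟩
        have hb'X : b' ∈ X := by
          have hUc : b' ∈ Uᶜ :=
            closure_minimal (fun t ht => ht.1.2) hUopen.isClosed_compl hb'cl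
          exact ⟨(hcd b' hb'cd).1, hUc⟩
        have hb'w : w < b' := lt_of_le_of_ne hb'ge fun he => hwX (he ▸ hb'X)
        have hsubI : Set.Ioo w b' ⊆ I := fun t ht =>
          (hcd t ⟨lt_trans hw.1 ht.1, lt_trans ht.2 hb'cd.2⟩).1
        have hsubU : Set.Ioo w b' ⊆ U := by
          intro t ht
          by_contra htU
          have htX : t ∈ X := ⟨hsubI ht, htU⟩
          have htR : t ∈ R := ⟨htX, ht.1, lt_trans ht.2 hb'cd.2⟩
          exact absurd (hglb.1 htR) (not_le.mpr ht.2)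
        obtain ⟨p, hp⟩ := hcomp w b' hsubI hsubU
        have hb'cl2 : b' ∈ closure (Set.Ioo w b') := by
          rw [closure_Ioo (ne_of_lt hb'w)]
          exact ⟨hb'w.le, le_refl _⟩
        have hbd : ∀ j, iteratedDeriv j σ b' = (derivative^[j] p).eval b' := fun j =>
          boundary_derivs hIopen hσ hsubI hb'X.1 hb'cl2 p hp j
        have hvanish : ∀ j, (derivative^[j] (derivative^[k] p)).eval b' = 0 := by
          intro j
          have h1 : derivative^[j] (derivative^[k] p) = derivative^[k + j] p := by
            rw [← Function.iterate_add_apply, Nat.add_comm j k]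
          rw [h1, ← hbd (k + j)]
          exact hXj j b' ⟨hb'X, hb'cd⟩
        have hpk : derivative^[k] p = 0 :=
          poly_eq_zero_of_derivs b' _ _ le_rfl hvanish
        have hEq : Set.EqOn (iteratedDeriv k σ) (fun _ => (0 : ℝ)) (Set.Ioo w b') := by
          intro t ht
          have he : Set.EqOn (iteratedDeriv k σ) (iteratedDeriv k fun y => p.eval y)
              (Set.Ioo w b') := hp.iteratedDeriv_of_isOpen isOpen_Ioo k
          have h2 := he ht
          rw [iter_poly, hpk] at h2
          simpa using h2
        have hwcl : w ∈ closure (Set.Ioo w b') := by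
          rw [closure_Ioo (ne_of_lt hb'w)]
          exact ⟨le_refl _, hb'w.le⟩
        exact eq_at_closure hwcl (hcont k w hwI) continuousAt_const hEq
    -- hence σ is a polynomial on (c,d), so y₀ ∈ U, a contradiction
    have hsubI : Set.Ioo c d ⊆ I := fun t ht => (hcd t ht).1
    obtain ⟨q, hq⟩ := poly_of_iter_poly hIopen hσ c d hsubI k 0
      (by intro x hx; simpa using hall x hx)
    apply hy₀X.2
    refine ⟨min (y₀ - c) (d - y₀),
      lt_min (by linarith [hy₀cd.1]) (by linarith [hy₀cd.2]), q, ?_⟩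
    intro z hz
    have hzb : |z - y₀| < min (y₀ - c) (d - y₀) := by
      rw [← Real.dist_eq]; exact hz.2
    rw [abs_lt] at hzb
    have hm1 : min (y₀ - c) (d - y₀) ≤ y₀ - c := min_le_left _ _
    have hm2 : min (y₀ - c) (d - y₀) ≤ d - y₀ := min_le_right _ _
    exact hq z ⟨by linarith [hzb.1], by linarith [hzb.2]⟩
  -- conclude : σ is locally polynomial on I, hence polynomial
  have hloc : ∀ x ∈ Set.Ioo α β, ∃ ε > 0, ∃ p : Polynomial ℝ,
      Set.EqOn σ (fun y => p.eval y) (Set.Ioo α β ∩ Metric.ball x ε) := by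
    intro x hx
    obtain ⟨ε, hε, p, hp⟩ := hXempty x hx
    exact ⟨ε, hε, p, hp⟩
  obtain ⟨p, hp⟩ := poly_of_locally_poly σ α β hloc
  exact ⟨p, hp⟩
end

section
/- Let h : [0,1] → [0,1] be the hat function h(x) = 2x for x ≤ 1/2 and h(x) = 2(1-x) for x > 1/2, and let h_s denote its s-fold composition. Define g_m(x) = x - Σ_{s=1}^m h_s(x)/4^s. Then g_m is the piecewise linear interpolant of x² at the points i/2^m, i.e., g_m(i/2^m) = (i/2^m)² for all 0 ≤ i ≤ 2^m, and g_m is affine on each interval [i/2^m, (i+1)/2^m]. -/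
/-- The hat (tent) function on `[0,1]`. -/
noncomputable def hat (x : ℝ) : ℝ := if x ≤ 1/2 then 2 * x else 2 * (1 - x)

/-- `g_m(x) = x - Σ_{s=1}^m h^{∘s}(x)/4^s`. -/
noncomputable def gApprox (m : ℕ) (x : ℝ) : ℝ :=
  x - ∑ s ∈ Finset.Icc 1 m, hat^[s] x / 4 ^ s

lemma hat_of_le {x : ℝ} (h : x ≤ 1/2) : hat x = 2 * x := if_pos h

lemma hat_of_ge {x : ℝ} (h : 1/2 ≤ x) : hat x = 2 * (1 - x) := by
  rw [hat]
  split_ifs with h'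
  · have : x = 1/2 := le_antisymm h' h
    rw [this]; norm_num
  · rfl

lemma sum_Icc_one (n : ℕ) (f : ℕ → ℝ) :
    ∑ s ∈ Finset.Icc 1 n, f s = ∑ i ∈ Finset.range n, f (1 + i) := by
  rw [← Finset.Ico_add_one_right_eq_Icc, Finset.sum_Ico_eq_sum_range]
  simp

lemma gApprox_succ (m : ℕ) (x : ℝ) :
    gApprox (m + 1) x = x - hat x / 2 + gApprox m (hat x) / 4 := by
  unfold gApprox
  rw [sum_Icc_one (m+1), sum_Icc_one m, Finset.sum_range_succ']
  have h1 : ∀ i : ℕ, hat^[1 + (i + 1)] x / 4 ^ (1 + (i + 1)) =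
      (hat^[1 + i] (hat x) / 4 ^ (1 + i)) / 4 := by
    intro i
    have h2 : (1 + (i + 1)) = (1 + i) + 1 := by ring
    rw [h2, Function.iterate_succ_apply, pow_succ]
    ring
  rw [Finset.sum_congr rfl fun i _ => h1 i, ← Finset.sum_div]
  simp only [Function.iterate_one, Nat.add_zero, pow_one]
  ring

lemma key : ∀ m : ℕ, ∀ i : ℕ, i < 2 ^ m →
    ∀ x ∈ Set.Icc ((i : ℝ) / 2 ^ m) (((i : ℝ) + 1) / 2 ^ m),
      gApprox m x = ((2 * (i : ℝ) + 1) / 2 ^ m) * x - (i : ℝ) * ((i : ℝ) + 1) / 4 ^ m := by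
  intro m
  induction m with
  | zero =>
    intro i hi x _
    interval_cases i
    simp [gApprox]
  | succ m ih =>
    intro i hi x hx
    obtain ⟨hx1, hx2⟩ := hx
    have h2m : (0 : ℝ) < 2 ^ m := by positivity
    have h2m1 : (0 : ℝ) < 2 ^ (m + 1) := by positivity
    have hpow : (2 : ℝ) ^ (m + 1) = 2 * 2 ^ m := by rw [pow_succ]; ring
    have hpow4 : (4 : ℝ) ^ (m + 1) = 4 * 4 ^ m := by rw [pow_succ]; ring
    have hb : (4 : ℝ) ^ m = 2 ^ m * 2 ^ m := by
      rw [show (4:ℝ) = 2*2 by norm_num, mul_pow]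
    rw [div_le_iff₀ h2m1] at hx1
    rw [le_div_iff₀ h2m1] at hx2
    rw [gApprox_succ]
    by_cases hcase : i < 2 ^ m
    · -- left half: x ≤ 1/2, hat x = 2x
      have hib : (i : ℝ) + 1 ≤ 2 ^ m := by
        have h : (i : ℕ) + 1 ≤ 2 ^ m := hcase
        exact_mod_cast h
      have hxle : x ≤ 1/2 := by nlinarith
      have hmem : (2 * x) ∈ Set.Icc ((i : ℝ) / 2 ^ m) (((i : ℝ) + 1) / 2 ^ m) := by
        constructor
        · rw [div_le_iff₀ h2m]; nlinarith
        · rw [le_div_iff₀ h2m]; nlinarith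
      rw [hat_of_le hxle, ih i hcase (2 * x) hmem, hpow, hpow4, hb]
      field_simp
      ring
    · -- right half: 1/2 ≤ x, hat x = 2(1-x)
      push_neg at hcase
      have hcast : (2 : ℝ) ^ m ≤ i := by exact_mod_cast hcase
      set j : ℕ := 2 ^ (m + 1) - 1 - i with hjdef
      have hj : j < 2 ^ m := by
        have h1 : 2 ^ (m + 1) = 2 * 2 ^ m := by rw [pow_succ]; ring
        have h2 : 0 < 2 ^ m := Nat.pow_pos (by norm_num)
        omega
      have hji : (j : ℝ) = 2 * 2 ^ m - 1 - i := by
        have h1 : j + i + 1 = 2 ^ (m + 1) := by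
          have h2 : 2 ^ (m + 1) = 2 * 2 ^ m := by rw [pow_succ]; ring
          omega
        have h3 : ((j : ℕ) : ℝ) + i + 1 = 2 ^ (m + 1) := by exact_mod_cast h1
        rw [hpow] at h3; linarith
      have hxge : (1:ℝ)/2 ≤ x := by nlinarith
      have hmem : (2 * (1 - x)) ∈ Set.Icc ((j : ℝ) / 2 ^ m) (((j : ℝ) + 1) / 2 ^ m) := by
        constructor
        · rw [div_le_iff₀ h2m]; rw [hji]; nlinarith
        · rw [le_div_iff₀ h2m]; rw [hji]; nlinarith
      rw [hat_of_ge hxge, ih j hj (2 * (1 - x)) hmem, hji, hpow, hpow4, hb]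
      field_simp
      ring

theorem gApprox_is_interpolant_of_sq (m : ℕ) :
    (∀ i : ℕ, i ≤ 2 ^ m → gApprox m ((i : ℝ) / 2 ^ m) = ((i : ℝ) / 2 ^ m) ^ 2) ∧
    (∀ i : ℕ, i < 2 ^ m → ∃ a b : ℝ,
      ∀ x ∈ Set.Icc ((i : ℝ) / 2 ^ m) (((i : ℝ) + 1) / 2 ^ m),
        gApprox m x = a * x + b) := by
  have h2m : (0 : ℝ) < 2 ^ m := by positivity
  have hb : (4 : ℝ) ^ m = 2 ^ m * 2 ^ m := by
    rw [show (4:ℝ) = 2*2 by norm_num, mul_pow]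
  constructor
  · intro i hi
    by_cases hc : i < 2 ^ m
    · have hmem : ((i : ℝ) / 2 ^ m) ∈ Set.Icc ((i : ℝ) / 2 ^ m) (((i : ℝ) + 1) / 2 ^ m) :=
        ⟨le_refl _, (div_le_div_iff_of_pos_right h2m).mpr (by linarith)⟩
      rw [key m i hc _ hmem, hb]
      field_simp
      ring
    · have hieq : i = 2 ^ m := le_antisymm hi (not_lt.mp hc)
      have hpos : 0 < 2 ^ m := Nat.pow_pos (by norm_num)
      set k : ℕ := 2 ^ m - 1 with hkdef
      have hk : k < 2 ^ m := by omega
      have hkr : (k : ℝ) + 1 = 2 ^ m := by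
        have h1 : k + 1 = 2 ^ m := by omega
        exact_mod_cast h1
      have hir : (i : ℝ) = 2 ^ m := by exact_mod_cast hieq
      have hmem : ((i : ℝ) / 2 ^ m) ∈ Set.Icc ((k : ℝ) / 2 ^ m) (((k : ℝ) + 1) / 2 ^ m) :=
        ⟨(div_le_div_iff_of_pos_right h2m).mpr (by linarith), (div_le_div_iff_of_pos_right h2m).mpr (by linarith)⟩
      have hkr' : (k : ℝ) = 2 ^ m - 1 := by linarith
      rw [key m k hk _ hmem, hir, hkr', hb]
      field_simp
      ring
  · intro i hi
    exact ⟨(2 * (i : ℝ) + 1) / 2 ^ m, -((i : ℝ) * ((i : ℝ) + 1) / 4 ^ m), fun x hx => by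
      rw [key m i hi x hx]; ring⟩
end

section
/- With h the hat function and h_s its s-fold composition, for all x ∈ [0,1] and m ≥ 1, g_{m-1}(x) - g_m(x) = h_m(x)/4^m, where g_m is the piecewise linear interpolant of x² at the points i/2^m. -/
/-- `g` is the piecewise linear interpolant of `x ↦ x²` at the `2^m + 1` evenly
spaced points `i/2^m` in `[0,1]`. -/
def IsInterpolantSq (m : ℕ) (g : ℝ → ℝ) : Prop :=
  (∀ i : ℕ, i ≤ 2 ^ m → g ((i : ℝ) / 2 ^ m) = ((i : ℝ) / 2 ^ m) ^ 2) ∧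
  (∀ i : ℕ, i < 2 ^ m → ∃ a b : ℝ,
    ∀ x ∈ Set.Icc ((i : ℝ) / 2 ^ m) (((i : ℝ) + 1) / 2 ^ m), g x = a * x + b)

lemma hat_iter : ∀ m : ℕ, ∀ i : ℕ, i < 2^m → ∀ x : ℝ,
    (i:ℝ)/2^m ≤ x → x ≤ ((i:ℝ)+1)/2^m →
    hat^[m] x = if Even i then 2^m * x - i else (i+1) - 2^m * x := by
  intro m
  induction m with
  | zero =>
    intro i hi x h1 h2
    interval_cases i
    simp
  | succ m ih =>
    intro i hi x h1 h2
    have h2n : (0:ℝ) < 2^m := by positivity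
    have h2n1 : (0:ℝ) < 2^(m+1) := by positivity
    have h2R : (2:ℝ)^(m+1) = 2*2^m := by rw [pow_succ]; ring
    have hb1 : (i:ℝ) ≤ 2^(m+1) * x := by
      rw [div_le_iff₀ h2n1] at h1; linarith
    have hb2 : 2^(m+1) * x ≤ (i:ℝ) + 1 := by
      rw [le_div_iff₀ h2n1] at h2; linarith
    rw [Function.iterate_succ_apply]
    by_cases hcase : i < 2^m
    · have hiR : (i:ℝ) + 1 ≤ 2^m := by exact_mod_cast hcase
      have hx2 : x ≤ 1/2 := by nlinarith
      have hhat : hat x = 2 * x := if_pos hx2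
      rw [hhat, ih i hcase (2*x) (by rw [div_le_iff₀ h2n]; nlinarith)
        (by rw [le_div_iff₀ h2n]; nlinarith)]
      split_ifs <;> rw [pow_succ] <;> ring
    · have hiR : (2:ℝ)^m ≤ i := by exact_mod_cast not_lt.mp hcase
      have hxhalf : 1/2 ≤ x := by nlinarith
      have hhat : hat x = 2 * (1 - x) := by
        unfold hat
        split_ifs with h
        · have hx : x = 1/2 := le_antisymm h hxhalf
          rw [hx]; norm_num
        · rfl
      have hpow : 2^(m+1) = 2 * 2^m := by rw [pow_succ]; ring
      set j := 2^(m+1) - 1 - i with hj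
      have hj2 : j < 2^m := by omega
      have hji : j + i + 1 = 2^(m+1) := by omega
      have hjiR : (j:ℝ) + i + 1 = 2^(m+1) := by exact_mod_cast congrArg (Nat.cast : ℕ → ℝ) hji
      rw [hhat, ih j hj2 (2*(1-x)) (by rw [div_le_iff₀ h2n]; nlinarith)
        (by rw [le_div_iff₀ h2n]; nlinarith)]
      have hpar : i % 2 + j % 2 = 1 := by omega
      rcases Nat.even_or_odd i with he | ho
      · have hjodd : ¬ Even j := by rw [Nat.even_iff]; rw [Nat.even_iff] at he; omega
        rw [if_neg hjodd, if_pos he]; rw [h2R] at hjiR ⊢; linarith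
      · have hjeven : Even j := by rw [Nat.even_iff]; rw [Nat.odd_iff] at ho; omega
        have hine : ¬ Even i := Nat.not_even_iff_odd.mpr ho
        rw [if_pos hjeven, if_neg hine]; rw [h2R] at hjiR ⊢; linarith

theorem interpolant_refinement (m : ℕ) (hm : 1 ≤ m) (g₁ g₂ : ℝ → ℝ)
    (h₁ : IsInterpolantSq (m - 1) g₁) (h₂ : IsInterpolantSq m g₂) :
    ∀ x ∈ Set.Icc (0:ℝ) 1, g₁ x - g₂ x = hat^[m] x / 4 ^ m := by
  obtain ⟨n, rfl⟩ : ∃ n, m = n + 1 := ⟨m - 1, by omega⟩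
  simp only [Nat.add_sub_cancel] at h₁
  rintro x ⟨hx0, hx1⟩
  have h2n : (0:ℝ) < 2^n := by positivity
  have h2n1 : (0:ℝ) < 2^(n+1) := by positivity
  have h2R : (2:ℝ)^(n+1) = 2*2^n := by rw [pow_succ]; ring
  have hpow : 2^(n+1) = 2 * 2^n := by rw [pow_succ]; ring
  have h1le : 1 ≤ 2^(n+1) := Nat.one_le_two_pow
  -- choose the subinterval index i
  obtain ⟨i, hiM, hple, hqge⟩ : ∃ i : ℕ, i < 2^(n+1) ∧ (i:ℝ)/2^(n+1) ≤ x ∧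
      x ≤ ((i:ℝ)+1)/2^(n+1) := by
    refine ⟨min ⌊(2:ℝ)^(n+1) * x⌋₊ (2^(n+1) - 1), by omega, ?_, ?_⟩
    · rw [div_le_iff₀ h2n1]
      have hc : ((min ⌊(2:ℝ)^(n+1) * x⌋₊ (2^(n+1) - 1) : ℕ) : ℝ) ≤ ⌊(2:ℝ)^(n+1) * x⌋₊ := by
        exact_mod_cast min_le_left _ _
      have := Nat.floor_le (by positivity : (0:ℝ) ≤ 2^(n+1) * x)
      linarith
    · rw [le_div_iff₀ h2n1]
      rcases min_cases ⌊(2:ℝ)^(n+1) * x⌋₊ (2^(n+1) - 1) with ⟨he, _⟩ | ⟨he, _⟩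
      · rw [he]
        have := Nat.lt_floor_add_one ((2:ℝ)^(n+1) * x)
        linarith
      · rw [he]
        have hc : ((2^(n+1) - 1 : ℕ) : ℝ) = 2^(n+1) - 1 := by
          push_cast [Nat.cast_sub h1le]; norm_num
        rw [hc]; nlinarith
  have hb1 : (i:ℝ) ≤ 2^(n+1) * x := by rw [div_le_iff₀ h2n1] at hple; linarith
  have hb2 : 2^(n+1) * x ≤ (i:ℝ) + 1 := by rw [le_div_iff₀ h2n1] at hqge; linarith
  set j := i / 2 with hjdef
  have hjn : j < 2^n := by omega
  have hij : i = 2*j ∨ i = 2*j+1 := by omega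
  have hiR : (i:ℝ) = 2*j ∨ (i:ℝ) = 2*j+1 := by
    rcases hij with h|h
    · left; exact_mod_cast h
    · right; exact_mod_cast h
  obtain ⟨a₁, b₁, haff₁⟩ := h₁.2 j hjn
  obtain ⟨a₂, b₂, haff₂⟩ := h₂.2 i hiM
  have hsubl : (j:ℝ)/2^n ≤ x := by
    rw [div_le_iff₀ h2n]
    rcases hiR with h|h <;> nlinarith
  have hsubr : x ≤ ((j:ℝ)+1)/2^n := by
    rw [le_div_iff₀ h2n]
    rcases hiR with h|h <;> nlinarith
  -- the four interpolation equations
  have hjj : (j:ℝ)/2^n ≤ ((j:ℝ)+1)/2^n := (div_le_div_iff_of_pos_right h2n).mpr (by linarith)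
  have hii : (i:ℝ)/2^(n+1) ≤ ((i:ℝ)+1)/2^(n+1) := (div_le_div_iff_of_pos_right h2n1).mpr (by linarith)
  have eq1 : a₁ * ((j:ℝ)/2^n) + b₁ = ((j:ℝ)/2^n)^2 := by
    rw [← haff₁ _ ⟨le_refl _, hjj⟩]
    exact h₁.1 j hjn.le
  have eq2 : a₁ * (((j:ℝ)+1)/2^n) + b₁ = (((j:ℝ)+1)/2^n)^2 := by
    rw [← haff₁ _ ⟨hjj, le_refl _⟩]
    have := h₁.1 (j+1) (by omega)
    push_cast at this
    exact this
  have eq3 : a₂ * ((i:ℝ)/2^(n+1)) + b₂ = ((i:ℝ)/2^(n+1))^2 := by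
    rw [← haff₂ _ ⟨le_refl _, hii⟩]
    exact h₂.1 i hiM.le
  have eq4 : a₂ * (((i:ℝ)+1)/2^(n+1)) + b₂ = (((i:ℝ)+1)/2^(n+1))^2 := by
    rw [← haff₂ _ ⟨hii, le_refl _⟩]
    have := h₂.1 (i+1) (by omega)
    push_cast at this
    exact this
  rw [haff₁ x ⟨hsubl, hsubr⟩, haff₂ x ⟨hple, hqge⟩,
    hat_iter (n+1) i hiM x hple hqge]
  have h4R : (4:ℝ)^(n+1) = 2^(n+1) * 2^(n+1) := by rw [← mul_pow]; norm_num
  obtain ⟨J, hJ⟩ : ∃ J : ℝ, (j:ℝ) = J := ⟨_, rfl⟩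
  rw [hJ] at eq1 eq2
  rw [h2R] at eq3 eq4
  rcases hij with hcase | hcase
  · have hiR2 : (i:ℝ) = 2*J := by rw [← hJ]; exact_mod_cast hcase
    rw [if_pos ⟨j, by omega⟩, h4R, h2R, hiR2]
    rw [hiR2] at eq3 eq4
    obtain ⟨u, hu0, hu⟩ : ∃ u : ℝ, 0 < u ∧ (2:ℝ)^n = u := ⟨_, h2n, rfl⟩
    rw [hu] at eq1 eq2 eq3 eq4 ⊢
    have huu : u * u⁻¹ = 1 := mul_inv_cancel₀ (ne_of_gt hu0)
    linear_combination (u*x - J)*eq2 + (J+1-u*x)*eq1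
      - (2*u*x - 2*J)*eq4 - (2*J+1-2*u*x)*eq3 + ((a₂-a₁)*x)*huu
  · have hiR2 : (i:ℝ) = 2*J+1 := by rw [← hJ]; exact_mod_cast hcase
    rw [if_neg (by rw [Nat.even_iff]; omega), h4R, h2R, hiR2]
    rw [hiR2] at eq3 eq4
    obtain ⟨u, hu0, hu⟩ : ∃ u : ℝ, 0 < u ∧ (2:ℝ)^n = u := ⟨_, h2n, rfl⟩
    rw [hu] at eq1 eq2 eq3 eq4 ⊢
    have huu : u * u⁻¹ = 1 := mul_inv_cancel₀ (ne_of_gt hu0)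
    linear_combination (u*x - J)*eq2 + (J+1-u*x)*eq1
      - (2*u*x - (2*J+1))*eq4 - (2*J+2-2*u*x)*eq3 + ((a₂-a₁)*x)*huu
end

section
/- For all x ∈ [0,1], the Takagi-type series Σ_{k≥1} 4^{-k} H^{∘k}(x) converges and equals x(1-x), where H is the hat function on [0,1] and H^{∘k} its k-fold composition. -/
lemma hat_mem {x : ℝ} (hx : x ∈ Set.Icc (0:ℝ) 1) : hat x ∈ Set.Icc (0:ℝ) 1 := by
  obtain ⟨h0, h1⟩ := hx
  unfold hat
  split <;> constructor <;> linarith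

lemma hat_key (x : ℝ) : x * (1 - x) - hat x * (1 - hat x) / 4 = hat x / 4 := by
  unfold hat; split <;> ring

theorem takagi_series_eq_parabola (x : ℝ) (hx : x ∈ Set.Icc (0:ℝ) 1) :
    HasSum (fun k : ℕ => hat^[k + 1] x / 4 ^ (k + 1)) (x * (1 - x)) := by
  have hmem : ∀ k, hat^[k] x ∈ Set.Icc (0:ℝ) 1 := by
    intro k
    induction k with
    | zero => simpa using hx
    | succ n ih => rw [Function.iterate_succ_apply']; exact hat_mem ih
  set a : ℕ → ℝ := fun k => (hat^[k] x) * (1 - hat^[k] x) / 4 ^ k with ha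
  have hterm : ∀ k : ℕ, hat^[k + 1] x / 4 ^ (k + 1) = a k - a (k + 1) := by
    intro k
    simp only [ha, Function.iterate_succ_apply', pow_succ]
    linear_combination (-1 : ℝ) / 4 ^ k * hat_key (hat^[k] x)
  have hnonneg : ∀ k : ℕ, 0 ≤ hat^[k + 1] x / 4 ^ (k + 1) := by
    intro k
    obtain ⟨h0, h1⟩ := hmem (k + 1)
    positivity
  rw [hasSum_iff_tendsto_nat_of_nonneg hnonneg]
  have hsum : ∀ n : ℕ, ∑ k ∈ Finset.range n, hat^[k + 1] x / 4 ^ (k + 1) = a 0 - a n := by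
    intro n
    rw [show (∑ k ∈ Finset.range n, hat^[k + 1] x / 4 ^ (k + 1)) =
        ∑ k ∈ Finset.range n, (a k - a (k + 1)) from Finset.sum_congr rfl fun k _ => hterm k]
    exact Finset.sum_range_sub' a n
  simp only [hsum]
  have ha0 : a 0 = x * (1 - x) := by simp [ha]
  have htend : Filter.Tendsto a Filter.atTop (nhds 0) := by
    apply squeeze_zero
    · intro n
      obtain ⟨h0, h1⟩ := hmem n
      simp only [ha]
      exact div_nonneg (mul_nonneg h0 (by linarith)) (by positivity)
    · intro n
      obtain ⟨h0, h1⟩ := hmem n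
      simp only [ha]
      calc hat^[n] x * (1 - hat^[n] x) / 4 ^ n ≤ 1 / 4 ^ n := by
            gcongr
            nlinarith
        _ = (1/4:ℝ) ^ n := by rw [div_pow, one_pow]
    · exact tendsto_pow_atTop_nhds_zero_of_lt_one (by norm_num) (by norm_num)
  rw [ha0]
  have := htend.const_sub (x * (1 - x))
  simpa using this
end
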